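/- For all g, g' ∈ G∖H, μ_g·μ_{g'} = a·σ_{g·g'} + b·μ_{g·g'·x} + b·μ_{g·g'·x³} (note g·g' ∈ H and g·g'·x, g·g'·x³ ∈ G∖H). -/

import Mathlib

open Matrix Kronecker

/-- The block matrix `E` with zero diagonal blocks and all-ones off-diagonal blocks. -/
def Etil (n : ℕ) : Matrix (Fin 1 ⊕ Fin (n - 1)) (Fin 1 ⊕ Fin (n - 1)) ℚ :=
  Matrix.fromBlocks 0 (Matrix.of fun _ _ => 1) (Matrix.of fun _ _ => 1) 0

/-- The block matrix `Ã` with `A` as lower-right block and zeros elsewhere. -/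
def Atil {n : ℕ} (A : Matrix (Fin (n - 1)) (Fin (n - 1)) ℚ) :
    Matrix (Fin 1 ⊕ Fin (n - 1)) (Fin 1 ⊕ Fin (n - 1)) ℚ :=
  Matrix.fromBlocks 0 0 0 A

/-- The permutation matrix of the 4-cycle (1,2,3,4). -/
def xD : Matrix (Fin 4) (Fin 4) ℚ := !![0,1,0,0; 0,0,1,0; 0,0,0,1; 1,0,0,0]

/-- The permutation matrix of (1,2)(3,4). -/
def yD : Matrix (Fin 4) (Fin 4) ℚ := !![0,1,0,0; 1,0,0,0; 0,0,0,1; 0,0,1,0]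

/-- `σ_h := I_n ⊗ h`. -/
def sig (n : ℕ) (h : Matrix (Fin 4) (Fin 4) ℚ) :
    Matrix ((Fin 1 ⊕ Fin (n - 1)) × Fin 4) ((Fin 1 ⊕ Fin (n - 1)) × Fin 4) ℚ :=
  (1 : Matrix (Fin 1 ⊕ Fin (n - 1)) (Fin 1 ⊕ Fin (n - 1)) ℚ) ⊗ₖ h

/-- `μ_g := E ⊗ g + Ã₁ ⊗ (g·y) + Ã₂ ⊗ (g·x²·y)`. -/
def mu {n : ℕ} (A₁ : Matrix (Fin (n - 1)) (Fin (n - 1)) ℚ) (g : Matrix (Fin 4) (Fin 4) ℚ) :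
    Matrix ((Fin 1 ⊕ Fin (n - 1)) × Fin 4) ((Fin 1 ⊕ Fin (n - 1)) × Fin 4) ℚ :=
  Etil n ⊗ₖ g + Atil A₁ ⊗ₖ (g * yD) + Atil A₁ᵀ ⊗ₖ (g * xD ^ 2 * yD)

/-! Expanding `μ_g * μ_{g'}` with `(A ⊗ B) * (C ⊗ D) = AC ⊗ BD` gives nine terms. For `g' ∉ H`,
conjugation by `g'` swaps `y` and `x²y` (`y g' = g' x²y`, and `x²` is central), so each `4 × 4`
factor collapses to one of `p`, `p x²`, `p y`, `p x²y` with `p = g g'`. On the other side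
`x + x³ = y + x²y`, so `μ_{px} + μ_{px³}` is a combination of the same four Kronecker factors.
Comparing coefficients leaves four identities between `E`, `Ã₁`, `Ã₂`: the scheme relations, and
the fact that the row and column sums of `A₁` are all `b` (the column sums because
`A₁ + A₂ = J - I`). -/

lemma one_fin_four {α : Type*} [Zero α] [One α] :
    (1 : Matrix (Fin 4) (Fin 4) α) = !![1, 0, 0, 0; 0, 1, 0, 0; 0, 0, 1, 0; 0, 0, 0, 1] := by
  ext i j; fin_cases i <;> fin_cases j <;> rfl

lemma yD_mul_yD : yD * yD = 1 := by
  simp [yD, one_fin_four]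

lemma xD_sq_mul_xD_sq : xD ^ 2 * xD ^ 2 = 1 := by
  simp [xD, sq, one_fin_four]

lemma yD_mul_xD_sq_mul_yD : yD * (xD ^ 2 * yD) = xD ^ 2 := by
  simp [xD, yD, sq]

lemma xD_add_xD_pow_three : xD + xD ^ 3 = yD + xD ^ 2 * yD := by
  simp [xD, yD, pow_succ]

def xCoset : Set (Matrix (Fin 4) (Fin 4) ℚ) := {xD, xD ^ 3, xD * yD, xD ^ 3 * yD}

lemma yD_mul_of_mem_xCoset {g : Matrix (Fin 4) (Fin 4) ℚ} (hg : g ∈ xCoset) :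
    yD * g = g * (xD ^ 2 * yD) := by
  rcases hg with rfl | rfl | rfl | rfl <;> simp [xD, yD, pow_succ]

lemma xD_sq_mul_of_mem_xCoset {g : Matrix (Fin 4) (Fin 4) ℚ} (hg : g ∈ xCoset) :
    xD ^ 2 * g = g * xD ^ 2 := by
  rcases hg with rfl | rfl | rfl | rfl <;> simp [xD, yD, pow_succ]

lemma sum_col_of_add_transpose_eq {ι : Type*} [Fintype ι] [DecidableEq ι] {A : Matrix ι ι ℚ}
    {b : ℚ} (hsum : A + Aᵀ = of (fun _ _ => 1) - 1) (hrow : ∀ i, ∑ j, A i j = b) (j : ι) :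
    ∑ i, A i j = Fintype.card ι - 1 - b := by
  have h := congrArg (fun M => ∑ i, M i j) hsum
  simp only [Matrix.add_apply, Matrix.sub_apply, transpose_apply, of_apply, Finset.sum_add_distrib,
    hrow, Finset.sum_sub_distrib, one_apply, Finset.sum_ite_eq', Finset.mem_univ, if_true,
    Finset.sum_const, Finset.card_univ, nsmul_eq_mul, mul_one] at h
  linarith

section Blocks

variable {n : ℕ}

lemma Atil_mul (A B : Matrix (Fin (n - 1)) (Fin (n - 1)) ℚ) : Atil A * Atil B = Atil (A * B) := by
  simp [Atil, fromBlocks_multiply]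

lemma Atil_add (A B : Matrix (Fin (n - 1)) (Fin (n - 1)) ℚ) : Atil (A + B) = Atil A + Atil B := by
  simp [Atil, fromBlocks_add]

lemma Atil_smul (c : ℚ) (A : Matrix (Fin (n - 1)) (Fin (n - 1)) ℚ) : Atil (c • A) = c • Atil A := by
  simp [Atil, fromBlocks_smul]

lemma Etil_mul_Etil :
    Etil n * Etil n = fromBlocks (of fun _ _ => ((n - 1 : ℕ) : ℚ)) 0 0 (of fun _ _ => 1) := by
  simp only [Etil, fromBlocks_multiply]
  congr 1 <;> ext <;> simp [mul_apply]

lemma Etil_mul_Atil_add_Atil_mul_Etil {c : ℚ} {A B : Matrix (Fin (n - 1)) (Fin (n - 1)) ℚ}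
    (hA : ∀ j, ∑ i, A i j = c) (hB : ∀ i, ∑ j, B i j = c) :
    Etil n * Atil A + Atil B * Etil n = c • Etil n := by
  simp only [Etil, Atil, fromBlocks_multiply, fromBlocks_add, fromBlocks_smul]
  congr 1 <;> ext <;> simp [mul_apply, hA, hB]

end Blocks

section Scheme

variable {n : ℕ} {b : ℚ} {A : Matrix (Fin (n - 1)) (Fin (n - 1)) ℚ}

lemma Atil_mul_self_add_Atil_transpose_mul_self
    (h11 : A * A = ((b - 1) / 2) • A + ((b + 1) / 2) • Aᵀ)
    (h22 : Aᵀ * Aᵀ = ((b + 1) / 2) • A + ((b - 1) / 2) • Aᵀ) :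
    Atil A * Atil A + Atil Aᵀ * Atil Aᵀ = b • (Atil A + Atil Aᵀ) := by
  simp only [Atil_mul, h11, h22, ← Atil_add, ← Atil_smul]
  congr 1
  module

lemma Etil_mul_Etil_add_Atil_mul_Atil_transpose_add_Atil_transpose_mul_Atil
    (hcard : ((n - 1 : ℕ) : ℚ) = 2 * b + 1)
    (hsum : A + Aᵀ = (of fun _ _ => (1 : ℚ)) - 1)
    (h12 : A * Aᵀ = b • (1 : Matrix (Fin (n - 1)) (Fin (n - 1)) ℚ)
      + ((b - 1) / 2) • A + ((b - 1) / 2) • Aᵀ)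
    (h21 : Aᵀ * A = b • (1 : Matrix (Fin (n - 1)) (Fin (n - 1)) ℚ)
      + ((b - 1) / 2) • A + ((b - 1) / 2) • Aᵀ) :
    Etil n * Etil n + Atil A * Atil Aᵀ + Atil Aᵀ * Atil A
      = (2 * b + 1) • 1 + b • (Atil A + Atil Aᵀ) := by
  rw [Atil_mul, Atil_mul, h12, h21, Etil_mul_Etil, ← Atil_add, ← Atil_smul, ← fromBlocks_one]
  have hJ : (of fun _ _ => (1 : ℚ)) = A + Aᵀ + 1 := by rw [hsum]; abel
  simp only [Atil, fromBlocks_add, fromBlocks_smul, add_zero, smul_zero]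
  congr 1
  · ext i j; simp [hcard, Subsingleton.elim i j]
  · rw [hJ]
    module

end Scheme

section Products

variable {n : ℕ} (A : Matrix (Fin (n - 1)) (Fin (n - 1)) ℚ)

lemma mu_add (g h : Matrix (Fin 4) (Fin 4) ℚ) : mu A g + mu A h = mu A (g + h) := by
  simp only [mu, add_mul, kronecker_add]
  abel

lemma mu_mul_mu (g : Matrix (Fin 4) (Fin 4) ℚ) {g' : Matrix (Fin 4) (Fin 4) ℚ}
    (hg' : g' ∈ xCoset) :
    mu A g * mu A g' =
      (Etil n * Etil n + Atil A * Atil Aᵀ + Atil Aᵀ * Atil A) ⊗ₖ (g * g')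
      + (Atil A * Atil A + Atil Aᵀ * Atil Aᵀ) ⊗ₖ (g * g' * xD ^ 2)
      + (Etil n * Atil A + Atil Aᵀ * Etil n) ⊗ₖ (g * g' * yD)
      + (Etil n * Atil Aᵀ + Atil A * Etil n) ⊗ₖ (g * g' * (xD ^ 2 * yD)) := by
  have hy (X : Matrix (Fin 4) (Fin 4) ℚ) : X * yD * g' = X * g' * xD ^ 2 * yD := by
    rw [mul_assoc, yD_mul_of_mem_xCoset hg', ← mul_assoc, ← mul_assoc]
  have hx (X : Matrix (Fin 4) (Fin 4) ℚ) : X * xD ^ 2 * g' = X * g' * xD ^ 2 := by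
    rw [mul_assoc, xD_sq_mul_of_mem_xCoset hg', ← mul_assoc]
  simp only [mu, add_mul, mul_add, ← mul_kronecker_mul]
  simp only [← mul_assoc, hy, hx]
  simp only [mul_assoc, yD_mul_yD, xD_sq_mul_xD_sq, yD_mul_xD_sq_mul_yD, mul_one, add_kronecker]
  abel

lemma mu_mul_xD_add_mu_mul_xD_pow_three (p : Matrix (Fin 4) (Fin 4) ℚ) :
    mu A (p * xD) + mu A (p * xD ^ 3) =
      Etil n ⊗ₖ (p * yD) + Etil n ⊗ₖ (p * (xD ^ 2 * yD))
      + (Atil A + Atil Aᵀ) ⊗ₖ p + (Atil A + Atil Aᵀ) ⊗ₖ (p * xD ^ 2) := by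
  have hs : p * xD + p * xD ^ 3 = p * yD + p * (xD ^ 2 * yD) := by
    rw [← mul_add, xD_add_xD_pow_three, mul_add]
  rw [mu_add, hs, mu]
  simp only [add_mul, mul_assoc, yD_mul_yD, xD_sq_mul_xD_sq, yD_mul_xD_sq_mul_yD, mul_one,
    kronecker_add, add_kronecker]
  abel

end Products

theorem stmt_8_general (n : ℕ) (hn : 4 ≤ n) (a b : ℚ)
    (ha : a = (n : ℚ) - 1) (hb : b = ((n : ℚ) - 2) / 2)
    (A₁ : Matrix (Fin (n - 1)) (Fin (n - 1)) ℚ)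
    (hsum : A₁ + A₁ᵀ = (Matrix.of fun _ _ => (1 : ℚ)) - 1)
    (hrow : ∀ i, ∑ j, A₁ i j = b)
    (h11 : A₁ * A₁ = ((b - 1) / 2) • A₁ + ((b + 1) / 2) • A₁ᵀ)
    (h22 : A₁ᵀ * A₁ᵀ = ((b + 1) / 2) • A₁ + ((b - 1) / 2) • A₁ᵀ)
    (h12 : A₁ * A₁ᵀ = b • (1 : Matrix (Fin (n - 1)) (Fin (n - 1)) ℚ)
      + ((b - 1) / 2) • A₁ + ((b - 1) / 2) • A₁ᵀ)
    (h21 : A₁ᵀ * A₁ = b • (1 : Matrix (Fin (n - 1)) (Fin (n - 1)) ℚ)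
      + ((b - 1) / 2) • A₁ + ((b - 1) / 2) • A₁ᵀ) :
    ∀ g ∈ ({xD, xD ^ 3, xD * yD, xD ^ 3 * yD} : Set (Matrix (Fin 4) (Fin 4) ℚ)), ∀ g' ∈ ({xD, xD ^ 3, xD * yD, xD ^ 3 * yD} : Set (Matrix (Fin 4) (Fin 4) ℚ)), mu A₁ g * mu A₁ g' = a • sig n (g * g') + b • mu A₁ (g * g' * xD) + b • mu A₁ (g * g' * xD ^ 3) := by
  intro g _ g' hg'
  have hcard : ((n - 1 : ℕ) : ℚ) = 2 * b + 1 := by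
    rw [Nat.cast_sub (by omega), hb]
    push_cast
    ring
  have hcol (j : Fin (n - 1)) : ∑ i, A₁ i j = b := by
    rw [sum_col_of_add_transpose_eq hsum hrow, Fintype.card_fin, hcard]
    ring
  have ha' : a = 2 * b + 1 := by rw [ha, hb]; ring
  rw [mu_mul_mu A₁ g hg', Etil_mul_Etil_add_Atil_mul_Atil_transpose_add_Atil_transpose_mul_Atil
      hcard hsum h12 h21, Atil_mul_self_add_Atil_transpose_mul_self h11 h22,
    Etil_mul_Atil_add_Atil_mul_Etil (B := A₁ᵀ) hcol hcol,
    Etil_mul_Atil_add_Atil_mul_Etil (A := A₁ᵀ) hrow hrow,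
    add_assoc _ (b • _), ← smul_add, mu_mul_xD_add_mu_mul_xD_pow_three, sig, ha']
  simp only [add_kronecker, smul_kronecker]
  module

theorem stmt_8 (n : ℕ) (hn : 4 ≤ n) (a b : ℚ)
    (ha : a = (n : ℚ) - 1) (hb : b = ((n : ℚ) - 2) / 2)
    (A₁ : Matrix (Fin (n - 1)) (Fin (n - 1)) ℚ)
    (h01 : ∀ i j, A₁ i j = 0 ∨ A₁ i j = 1)
    (hdiag : ∀ i, A₁ i i = 0)
    (hns : A₁ ≠ A₁ᵀ)
    (hsum : A₁ + A₁ᵀ = (Matrix.of fun _ _ => (1 : ℚ)) - 1)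
    (hrow : ∀ i, ∑ j, A₁ i j = b)
    (h11 : A₁ * A₁ = ((b - 1) / 2) • A₁ + ((b + 1) / 2) • A₁ᵀ)
    (h22 : A₁ᵀ * A₁ᵀ = ((b + 1) / 2) • A₁ + ((b - 1) / 2) • A₁ᵀ)
    (h12 : A₁ * A₁ᵀ = b • (1 : Matrix (Fin (n - 1)) (Fin (n - 1)) ℚ)
      + ((b - 1) / 2) • A₁ + ((b - 1) / 2) • A₁ᵀ)
    (h21 : A₁ᵀ * A₁ = b • (1 : Matrix (Fin (n - 1)) (Fin (n - 1)) ℚ)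
      + ((b - 1) / 2) • A₁ + ((b - 1) / 2) • A₁ᵀ) :
    ∀ g ∈ ({xD, xD ^ 3, xD * yD, xD ^ 3 * yD} : Set (Matrix (Fin 4) (Fin 4) ℚ)), ∀ g' ∈ ({xD, xD ^ 3, xD * yD, xD ^ 3 * yD} : Set (Matrix (Fin 4) (Fin 4) ℚ)), mu A₁ g * mu A₁ g' = a • sig n (g * g') + b • mu A₁ (g * g' * xD) + b • mu A₁ (g * g' * xD ^ 3) :=
  stmt_8_general n hn a b ha hb A₁ hsum hrow h11 h22 h12 h21
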